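/- arXiv:2506.15602 — 4 statements merged into one kernel-verified Lean document; each statement's English description precedes it below -/
import Mathlib

section
/- For every 1 ≤ k ≤ K and every x ∈ S_k, the mean hitting time of the optimal level decomposes over the intermediate levels as m(x) = Σ_{ℓ=1}^{k} Σ_{y∈S_ℓ} h(x,y) · m̄(y). -/
/-!
The right-hand side `g(x) = Σ_{ℓ=1}^{K} Σ_{y∈S_ℓ} h(x,y) m̄(y)` satisfies the same linear system
as the mean hitting time: it vanishes on `S_0`, and for `x ∈ S_k` the terms with `ℓ < k` are
`p`-harmonic (first-step analysis of `h`), the term `ℓ = k` equals `m̄(x)` and obeys the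
level-leaving recurrence, and the terms with `ℓ > k` vanish. That system has a unique solution:
the difference `v` of two solutions vanishes on `S_0`, and on `S_k` it solves
`v = P|_{S_k} v`, where by reachability every row of `P|_{S_k}` sums to less than one, so a
maximum principle forces `v = 0` level by level.
-/

open Finset

/-- A finite state space partitioned into fitness levels `S_0, …, S_K`
(`lev x = k` means `x ∈ S_k`), together with an elitist row-stochastic
transition matrix `p`. -/
structure LevelChain (S : Type*) [Fintype S] where
  /-- the number of non-optimal levels -/
  K : ℕ
  /-- the level of each state -/
  lev : S → ℕ
  one_le_K : 1 ≤ K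
  lev_le : ∀ x, lev x ≤ K
  level_nonempty : ∀ k ≤ K, ∃ x, lev x = k
  /-- transition probabilities -/
  p : S → S → ℝ
  p_nonneg : ∀ x y, 0 ≤ p x y
  p_row_sum : ∀ x, ∑ y, p x y = 1
  elitist : ∀ x y, lev x < lev y → p x y = 0

variable {S : Type*} [Fintype S]

/-- The fitness level `S_k`. -/
def LevelChain.level (c : LevelChain S) (k : ℕ) : Finset S :=
  Finset.univ.filter fun x => c.lev x = k

/-- The union of levels `S_{[i,j]} = S_i ∪ ⋯ ∪ S_j`. -/
def LevelChain.levels (c : LevelChain S) (i j : ℕ) : Finset S :=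
  Finset.univ.filter fun x => i ≤ c.lev x ∧ c.lev x ≤ j

/-- `p(x, A) = Σ_{y ∈ A} p(x, y)`. -/
def LevelChain.pSet (c : LevelChain S) (x : S) (A : Finset S) : ℝ :=
  ∑ y ∈ A, c.p x y

/-- The standing reachability assumption: from every non-optimal state one can
move to a better level with positive probability. -/
def LevelChain.Reachable (c : LevelChain S) : Prop :=
  ∀ k, 1 ≤ k → k ≤ c.K → ∀ x, c.lev x = k → 0 < c.pSet x (c.levels 0 (k - 1))

/-- Conditional transition probability `r(x, S_j)`:
`r(x,S_j) = p(x,S_j)/(1 − p(x,S_k))` for `j ≠ k = lev x`, and `r(x,S_k) = 0`. -/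
noncomputable def LevelChain.r (c : LevelChain S) (x : S) (j : ℕ) : ℝ :=
  if j = c.lev x then 0
  else c.pSet x (c.level j) / (1 - c.pSet x (c.level (c.lev x)))

/-- `r_min(X_k, S_j) = min_{x ∈ S_k} r(x, S_j)`. -/
noncomputable def LevelChain.rmin (c : LevelChain S) (k j : ℕ) : ℝ :=
  sInf ((fun x => c.r x j) '' {x | c.lev x = k})

/-- `r_max(X_k, S_j) = max_{x ∈ S_k} r(x, S_j)`. -/
noncomputable def LevelChain.rmax (c : LevelChain S) (k j : ℕ) : ℝ :=
  sSup ((fun x => c.r x j) '' {x | c.lev x = k})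

/-- `m` is the mean hitting time of the optimal level `S_0`. -/
def LevelChain.IsMeanHittingTime (c : LevelChain S) (m : S → ℝ) : Prop :=
  (∀ x, 0 ≤ m x) ∧
  (∀ x, c.lev x = 0 → m x = 0) ∧
  (∀ x, c.lev x ≠ 0 → m x = 1 + ∑ y, c.p x y * m y)

/-- `mbar` is the mean level-leaving time on `S ∖ S_0`. -/
def LevelChain.IsLevelLeavingTime (c : LevelChain S) (mbar : S → ℝ) : Prop :=
  (∀ x, c.lev x ≠ 0 → 0 ≤ mbar x) ∧
  (∀ x, c.lev x ≠ 0 → mbar x = 1 + ∑ y ∈ c.level (c.lev x), c.p x y * mbar y)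

/-- `h ℓ x` is the probability of hitting level `S_ℓ` starting from `x`. -/
def LevelChain.IsHitProb (c : LevelChain S) (h : ℕ → S → ℝ) : Prop :=
  (∀ ℓ x, 0 ≤ h ℓ x ∧ h ℓ x ≤ 1) ∧
  (∀ ℓ x, c.lev x = ℓ → h ℓ x = 1) ∧
  (∀ ℓ x, c.lev x < ℓ → h ℓ x = 0) ∧
  (∀ ℓ x, ℓ < c.lev x →
    h ℓ x = ∑ y ∈ c.levels ℓ (c.lev x), c.p x y * h ℓ y)

/-- Pointwise hitting probabilities `h x y` of hitting the level of `y`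
at state `y`, for `y` in a non-optimal level. -/
def LevelChain.IsPointHitProb (c : LevelChain S) (h : S → S → ℝ) : Prop :=
  (∀ x y, 0 ≤ h x y ∧ h x y ≤ 1) ∧
  (∀ y, 1 ≤ c.lev y → h y y = 1) ∧
  (∀ x y, 1 ≤ c.lev y → c.lev x = c.lev y → x ≠ y → h x y = 0) ∧
  (∀ x y, 1 ≤ c.lev y → c.lev x < c.lev y → h x y = 0) ∧
  (∀ x y, 1 ≤ c.lev y → c.lev y < c.lev x →
    h x y = ∑ z ∈ c.levels (c.lev y) (c.lev x), c.p x z * h z y)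

theorem Finset.eq_zero_of_eq_sum_mul_of_sum_lt_one {ι : Type*} (s : Finset ι) (p : ι → ι → ℝ)
    (v : ι → ℝ) (hp : ∀ x ∈ s, ∀ y ∈ s, 0 ≤ p x y) (hlt : ∀ x ∈ s, ∑ y ∈ s, p x y < 1)
    (hv : ∀ x ∈ s, v x = ∑ y ∈ s, p x y * v y) : ∀ x ∈ s, v x = 0 := by
  intro x hx
  obtain ⟨x₀, hx₀, hmax⟩ := s.exists_max_image (fun y => |v y|) ⟨x, hx⟩
  have hbound : |v x₀| ≤ (∑ y ∈ s, p x₀ y) * |v x₀| :=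
    calc |v x₀| = |∑ y ∈ s, p x₀ y * v y| := by rw [← hv x₀ hx₀]
      _ ≤ ∑ y ∈ s, |p x₀ y * v y| := abs_sum_le_sum_abs _ _
      _ ≤ ∑ y ∈ s, p x₀ y * |v x₀| := by
        refine sum_le_sum fun y hy => ?_
        rw [abs_mul, abs_of_nonneg (hp x₀ hx₀ y hy)]
        exact mul_le_mul_of_nonneg_left (hmax y hy) (hp x₀ hx₀ y hy)
      _ = (∑ y ∈ s, p x₀ y) * |v x₀| := (sum_mul _ _ _).symm
  have hzero : |v x₀| = 0 := by nlinarith [abs_nonneg (v x₀), hlt x₀ hx₀]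
  exact abs_eq_zero.mp (le_antisymm (hzero ▸ hmax x hx) (abs_nonneg _))

namespace LevelChain

variable (c : LevelChain S)

@[simp]
theorem mem_level {k : ℕ} {x : S} : x ∈ c.level k ↔ c.lev x = k := by
  simp [level]

@[simp]
theorem mem_levels {i j : ℕ} {x : S} : x ∈ c.levels i j ↔ i ≤ c.lev x ∧ c.lev x ≤ j := by
  simp [levels]

theorem levels_self (k : ℕ) : c.levels k k = c.level k := by
  ext x
  simp only [mem_levels, mem_level]
  omega

theorem sum_p_mul_eq_sum_levels (x : S) {ℓ : ℕ} (f : S → ℝ)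
    (hf : ∀ y, c.lev y < ℓ → f y = 0) :
    ∑ y, c.p x y * f y = ∑ y ∈ c.levels ℓ (c.lev x), c.p x y * f y := by
  refine (sum_subset (subset_univ _) fun y _ hy => ?_).symm
  rw [mem_levels, not_and_or, not_le, not_le] at hy
  rcases hy with hy | hy
  · rw [hf y hy, mul_zero]
  · rw [c.elitist x y hy, zero_mul]

theorem pSet_level_lt_one (hreach : c.Reachable) {x : S} (hx : 1 ≤ c.lev x) :
    c.pSet x (c.level (c.lev x)) < 1 := by
  have hdisj : Disjoint (c.level (c.lev x)) (c.levels 0 (c.lev x - 1)) := by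
    rw [disjoint_left]
    intro y hy hy'
    rw [mem_level] at hy
    rw [mem_levels] at hy'
    omega
  have hsum : c.pSet x (c.level (c.lev x)) + c.pSet x (c.levels 0 (c.lev x - 1)) ≤ 1 := by
    rw [← c.p_row_sum x, pSet, pSet, ← sum_disjUnion hdisj]
    exact sum_le_sum_of_subset_of_nonneg (subset_univ _) fun y _ _ => c.p_nonneg x y
  linarith [hreach _ hx (c.lev_le x) x rfl]

theorem eq_zero_of_harmonic (hreach : c.Reachable) {v : S → ℝ}
    (hv₀ : ∀ x, c.lev x = 0 → v x = 0)
    (hv : ∀ x, c.lev x ≠ 0 → v x = ∑ y, c.p x y * v y) (x : S) : v x = 0 := by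
  induction hk : c.lev x using Nat.strong_induction_on generalizing x with
  | _ k ih =>
    rcases Nat.eq_zero_or_pos k with rfl | hpos
    · exact hv₀ x hk
    have hlevel : ∀ y ∈ c.level k, v y = ∑ z ∈ c.level k, c.p y z * v z := by
      intro y hy
      rw [mem_level] at hy
      rw [hv y (by omega), c.sum_p_mul_eq_sum_levels y v fun z hz => ih _ (hy ▸ hz) z rfl,
        hy, levels_self]
    refine eq_zero_of_eq_sum_mul_of_sum_lt_one _ c.p v (fun y _ z _ => c.p_nonneg y z)
      (fun y hy => ?_) hlevel x (c.mem_level.mpr hk)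
    rw [mem_level] at hy
    simpa [pSet, hy] using c.pSet_level_lt_one hreach (x := y) (by omega)

theorem isMeanHittingTime_unique (hreach : c.Reachable) {m m' : S → ℝ}
    (hm : c.IsMeanHittingTime m) (hm' : c.IsMeanHittingTime m') : m = m' := by
  funext x
  have hdiff := c.eq_zero_of_harmonic hreach (v := fun y => m y - m' y)
    (fun y hy => by simp [hm.2.1 y hy, hm'.2.1 y hy])
    (fun y hy => by
      simp only [hm.2.2 y hy, hm'.2.2 y hy, mul_sub, sum_sub_distrib]
      ring) x
  linarith

def levelSum (h : S → S → ℝ) (mbar : S → ℝ) (x : S) (ℓ : ℕ) : ℝ :=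
  ∑ y ∈ c.level ℓ, h x y * mbar y

def decomposition (h : S → S → ℝ) (mbar : S → ℝ) (x : S) : ℝ :=
  ∑ ℓ ∈ Icc 1 c.K, c.levelSum h mbar x ℓ

variable {c} {h : S → S → ℝ} {mbar : S → ℝ}

theorem levelSum_of_lev_lt (hh : c.IsPointHitProb h) {x : S} {ℓ : ℕ} (hℓ : 1 ≤ ℓ)
    (hx : c.lev x < ℓ) : c.levelSum h mbar x ℓ = 0 :=
  sum_eq_zero fun y hy => by
    rw [mem_level] at hy
    rw [hh.2.2.2.1 x y (by omega) (by omega), zero_mul]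

theorem levelSum_lev (hh : c.IsPointHitProb h) {x : S} (hx : 1 ≤ c.lev x) :
    c.levelSum h mbar x (c.lev x) = mbar x := by
  rw [levelSum, sum_eq_single_of_mem x (by simp), hh.2.1 x hx, one_mul]
  intro y hy hyx
  rw [mem_level] at hy
  rw [hh.2.2.1 x y (by omega) hy.symm (Ne.symm hyx), zero_mul]

theorem levelSum_eq_sum_p_mul_of_lt_lev (hh : c.IsPointHitProb h) {x : S} {ℓ : ℕ}
    (hℓ : 1 ≤ ℓ) (hx : ℓ < c.lev x) :
    c.levelSum h mbar x ℓ = ∑ z, c.p x z * c.levelSum h mbar z ℓ := by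
  have hfirst : ∀ y ∈ c.level ℓ, h x y = ∑ z, c.p x z * h z y := by
    intro y hy
    rw [mem_level] at hy
    rw [c.sum_p_mul_eq_sum_levels x (h · y) fun z hz => hh.2.2.2.1 z y (by omega) hz,
      hh.2.2.2.2 x y (by omega) (by omega)]
  calc c.levelSum h mbar x ℓ = ∑ y ∈ c.level ℓ, (∑ z, c.p x z * h z y) * mbar y :=
        sum_congr rfl fun y hy => by rw [hfirst y hy]
    _ = ∑ z, c.p x z * c.levelSum h mbar z ℓ := by
        simp only [levelSum, sum_mul, mul_sum, mul_assoc]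
        exact sum_comm

theorem levelSum_eq_ite_add_sum_p_mul (hh : c.IsPointHitProb h)
    (hmbar : c.IsLevelLeavingTime mbar) {x : S} {ℓ : ℕ} (hℓ : 1 ≤ ℓ) (hx : c.lev x ≠ 0) :
    c.levelSum h mbar x ℓ =
      (if ℓ = c.lev x then 1 else 0) + ∑ y, c.p x y * c.levelSum h mbar y ℓ := by
  rw [c.sum_p_mul_eq_sum_levels x _ fun y hy => levelSum_of_lev_lt hh hℓ hy]
  rcases lt_trichotomy ℓ (c.lev x) with hlt | rfl | hgt
  · rw [if_neg hlt.ne, zero_add, levelSum_eq_sum_p_mul_of_lt_lev hh hℓ hlt,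
      c.sum_p_mul_eq_sum_levels x _ fun y hy => levelSum_of_lev_lt hh hℓ hy]
  · rw [if_pos rfl, levelSum_lev hh hℓ, hmbar.2 x hx, levels_self]
    congr 1
    refine sum_congr rfl fun y hy => ?_
    rw [mem_level] at hy
    rw [← hy, levelSum_lev hh (hy ▸ hℓ)]
  · rw [if_neg hgt.ne', zero_add, levelSum_of_lev_lt hh hℓ hgt]
    refine (sum_eq_zero fun y hy => ?_).symm
    rw [mem_levels] at hy
    omega

theorem isMeanHittingTime_decomposition (hh : c.IsPointHitProb h)
    (hmbar : c.IsLevelLeavingTime mbar) : c.IsMeanHittingTime (c.decomposition h mbar) := by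
  refine ⟨fun x => ?_, fun x hx => ?_, fun x hx => ?_⟩
  · refine sum_nonneg fun ℓ hℓ => sum_nonneg fun y hy => ?_
    rw [mem_Icc] at hℓ
    rw [mem_level] at hy
    exact mul_nonneg (hh.1 x y).1 (hmbar.1 y (by omega))
  · refine sum_eq_zero fun ℓ hℓ => ?_
    rw [mem_Icc] at hℓ
    exact levelSum_of_lev_lt hh hℓ.1 (by omega)
  · have hlev : c.lev x ∈ Icc 1 c.K := mem_Icc.mpr ⟨by omega, c.lev_le x⟩
    simp only [decomposition, mul_sum]
    rw [sum_comm,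
      sum_congr rfl fun ℓ hℓ => levelSum_eq_ite_add_sum_p_mul hh hmbar (mem_Icc.mp hℓ).1 hx,
      sum_add_distrib, sum_ite_eq' _ _ (fun _ => (1 : ℝ)), if_pos hlev]

end LevelChain

/-- For every `1 ≤ k ≤ K` and every `x ∈ S_k`, the mean hitting time
of the optimal level decomposes over the intermediate levels as
`m(x) = Σ_{ℓ=1}^{k} Σ_{y ∈ S_ℓ} h(x,y)·m̄(y)`. -/
theorem meanHittingTime_decomposition
    (c : LevelChain S) (hreach : c.Reachable)
    (m mbar : S → ℝ) (h : S → S → ℝ)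
    (hm : c.IsMeanHittingTime m)
    (hmbar : c.IsLevelLeavingTime mbar)
    (hh : c.IsPointHitProb h) :
    ∀ k, 1 ≤ k → k ≤ c.K → ∀ x, c.lev x = k →
      m x = ∑ ℓ ∈ Finset.Icc 1 k, ∑ y ∈ c.level ℓ, h x y * mbar y := by
  intro k _ hkK x hx
  rw [c.isMeanHittingTime_unique hreach hm (c.isMeanHittingTime_decomposition hh hmbar)]
  refine (sum_subset (Icc_subset_Icc_right hkK) fun ℓ hℓ hℓk => ?_).symm
  rw [mem_Icc] at hℓ hℓk
  exact LevelChain.levelSum_of_lev_lt hh hℓ.1 (by omega)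
end

section
/- For every 1 ≤ k ≤ K and every x ∈ S_k, the mean hitting time of the optimal level is lower-bounded by m(x) ≥ Σ_{ℓ=1}^{k} h_min(X_k,S_ℓ) / p_max(X_ℓ, S_{[0,ℓ−1]}), where p_max(X_ℓ, S_{[0,ℓ−1]}) = max_{x∈S_ℓ} p(x, S_{[0,ℓ−1]}). -/
open Finset

variable {S : Type*} [Fintype S]

/- Let `W_k = Σ_{ℓ=1}^{k} h(·,S_ℓ) / p_max(X_ℓ, S_{[0,ℓ−1]})`. By induction on `k`,
`W_k ≤ m` on `S_{[0,k]}`. On `S_{k+1}` every `h(·,S_ℓ)` with `ℓ ≤ k` is harmonic, so `D = m − W_k`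
satisfies `D = 1 + p D` there, and `D ≥ 0` on the lower levels. At a minimiser `w` of `D` on `S_{k+1}`
this gives `p(w, S_{[0,k]}) D(w) ≥ 1`, hence `D ≥ 1 / p_max(X_{k+1}, S_{[0,k]})` on `S_{k+1}`,
which is exactly the new term of `W_{k+1}` since `h(·,S_{k+1}) = 1` there. -/

/-- Minimum principle for exit times: evaluate `f ≥ 1 + p f` at a minimiser of `f` on `A`. -/
theorem one_div_le_of_one_add_sum_le {ι : Type*} (A : Finset ι) (p : ι → ι → ℝ) (f : ι → ℝ)
    (q : ℝ) (hp : ∀ z y, 0 ≤ p z y) (hsub : ∀ z ∈ A, ∑ y ∈ A, p z y ≤ 1)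
    (hq : ∀ z ∈ A, 1 - ∑ y ∈ A, p z y ≤ q)
    (hf : ∀ z ∈ A, 1 + ∑ y ∈ A, p z y * f y ≤ f z) :
    ∀ z ∈ A, 1 / q ≤ f z := by
  intro z hz
  obtain ⟨w, hwA, hwmin⟩ := A.exists_min_image f ⟨z, hz⟩
  set P := ∑ y ∈ A, p w y
  have hPw : 1 + P * f w ≤ f w :=
    calc 1 + P * f w = 1 + ∑ y ∈ A, p w y * f w := by rw [Finset.sum_mul]
      _ ≤ 1 + ∑ y ∈ A, p w y * f y := by
        gcongr with y hy
        exacts [hp w y, hwmin y hy]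
      _ ≤ f w := hf w hwA
  have hesc : 1 ≤ (1 - P) * f w := by linarith
  have hesc_pos : 0 < 1 - P := by
    rcases (sub_nonneg.mpr (hsub w hwA)).lt_or_eq with hpos | hzero
    · exact hpos
    · rw [← hzero, zero_mul] at hesc
      linarith
  calc 1 / q ≤ 1 / (1 - P) := one_div_le_one_div_of_le hesc_pos (hq w hwA)
    _ ≤ f w := by rw [div_le_iff₀ hesc_pos]; linarith
    _ ≤ f z := hwmin z hz

namespace LevelChain

variable (c : LevelChain S)

/-- `p_max(X_ℓ, S_{[0,ℓ−1]})`. -/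
noncomputable def maxImproveProb (ℓ : ℕ) : ℝ :=
  sSup ((fun z => c.pSet z (c.levels 0 (ℓ - 1))) '' {z | c.lev z = ℓ})

theorem pSet_levels_le_maxImproveProb {ℓ : ℕ} {z : S} (hz : c.lev z = ℓ) :
    c.pSet z (c.levels 0 (ℓ - 1)) ≤ c.maxImproveProb ℓ :=
  le_csSup (Set.toFinite _).bddAbove ⟨z, hz, rfl⟩

theorem maxImproveProb_nonneg (ℓ : ℕ) : 0 ≤ c.maxImproveProb ℓ :=
  Real.sSup_nonneg fun _ ⟨z, _, hz⟩ => hz ▸ Finset.sum_nonneg fun y _ => c.p_nonneg z y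

theorem pSet_levels_add_pSet_level {k : ℕ} {x : S} (hx : c.lev x = k + 1) :
    c.pSet x (c.levels 0 k) + c.pSet x (c.level (k + 1)) = 1 := by
  classical
  have hdisj : Disjoint (c.levels 0 k) (c.level (k + 1)) := by
    rw [Finset.disjoint_left]
    intro y hy1 hy2
    simp only [levels, level, Finset.mem_filter, Finset.mem_univ, true_and] at hy1 hy2
    omega
  rw [pSet, pSet, ← Finset.sum_union hdisj, ← c.p_row_sum x]
  refine Finset.sum_subset (Finset.subset_univ _) fun y _ hy => c.elitist x y ?_
  simp only [Finset.mem_union, levels, level, Finset.mem_filter, Finset.mem_univ, true_and,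
    not_or] at hy
  omega

variable {c}

theorem IsHitProb.eq_sum_mul {h : ℕ → S → ℝ} (hh : c.IsHitProb h) {ℓ : ℕ} {x : S}
    (hℓ : ℓ < c.lev x) : h ℓ x = ∑ y, c.p x y * h ℓ y := by
  rw [hh.2.2.2 ℓ x hℓ]
  refine Finset.sum_subset (Finset.subset_univ _) fun y _ hy => ?_
  simp only [levels, Finset.mem_filter, Finset.mem_univ, true_and, not_and, not_le] at hy
  by_cases hyℓ : ℓ ≤ c.lev y
  · rw [c.elitist x y (hy hyℓ), zero_mul]
  · rw [hh.2.2.1 ℓ y (by omega), mul_zero]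

variable (c)

noncomputable def weightedHitSum (h : ℕ → S → ℝ) (k : ℕ) (x : S) : ℝ :=
  ∑ ℓ ∈ Finset.Icc 1 k, h ℓ x / c.maxImproveProb ℓ

variable {c}

theorem weightedHitSum_succ (h : ℕ → S → ℝ) (k : ℕ) (x : S) :
    c.weightedHitSum h (k + 1) x = c.weightedHitSum h k x + h (k + 1) x / c.maxImproveProb (k + 1) :=
  Finset.sum_Icc_succ_top (by omega) _

theorem IsHitProb.weightedHitSum_eq_sum_mul {h : ℕ → S → ℝ} (hh : c.IsHitProb h) {k : ℕ}
    {x : S} (hx : k < c.lev x) :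
    c.weightedHitSum h k x = ∑ y, c.p x y * c.weightedHitSum h k y :=
  calc c.weightedHitSum h k x
      = ∑ ℓ ∈ Finset.Icc 1 k, ∑ y, c.p x y * (h ℓ y / c.maxImproveProb ℓ) := by
        refine Finset.sum_congr rfl fun ℓ hℓ => ?_
        rw [hh.eq_sum_mul (lt_of_le_of_lt (Finset.mem_Icc.mp hℓ).2 hx), Finset.sum_div]
        simp only [mul_div_assoc]
    _ = ∑ y, c.p x y * c.weightedHitSum h k y := by
        rw [Finset.sum_comm]
        simp only [weightedHitSum, Finset.mul_sum]

theorem one_div_maxImproveProb_le_sub_weightedHitSum {m : S → ℝ} {h : ℕ → S → ℝ}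
    (hm : c.IsMeanHittingTime m) (hh : c.IsHitProb h) {k : ℕ}
    (hbelow : ∀ y, c.lev y ≤ k → c.weightedHitSum h k y ≤ m y) {x : S} (hx : c.lev x = k + 1) :
    1 / c.maxImproveProb (k + 1) ≤ m x - c.weightedHitSum h k x := by
  classical
  set D := fun y => m y - c.weightedHitSum h k y
  have hmem {z : S} : z ∈ c.level (k + 1) ↔ c.lev z = k + 1 := by simp [level]
  have hsplit {z : S} (hz : c.lev z = k + 1) := c.pSet_levels_add_pSet_level hz
  have hnonneg {z : S} (hz : c.lev z = k + 1) : 0 ≤ c.pSet z (c.levels 0 k) :=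
    Finset.sum_nonneg fun y _ => c.p_nonneg z y
  refine one_div_le_of_one_add_sum_le (c.level (k + 1)) c.p D _ c.p_nonneg
    (fun z hz => ?_) (fun z hz => ?_) (fun z hz => ?_) x (hmem.mpr hx) <;> rw [hmem] at hz
  · change c.pSet z (c.level (k + 1)) ≤ 1
    linarith [hsplit hz, hnonneg hz]
  · change 1 - c.pSet z (c.level (k + 1)) ≤ _
    have := c.pSet_levels_le_maxImproveProb hz
    simp only [Nat.add_sub_cancel] at this
    linarith [hsplit hz]
  · have hDz : D z = 1 + ∑ y, c.p z y * D y := by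
      simp only [D, mul_sub, Finset.sum_sub_distrib, hm.2.2 z (by omega),
        ← hh.weightedHitSum_eq_sum_mul (k := k) (by omega : k < c.lev z)]
      ring
    have hout : 0 ≤ ∑ y ∈ (c.level (k + 1))ᶜ, c.p z y * D y := by
      refine Finset.sum_nonneg fun y hy => ?_
      rw [Finset.mem_compl, hmem] at hy
      rcases Nat.lt_or_gt_of_ne hy with hlow | hhigh
      · exact mul_nonneg (c.p_nonneg z y) (sub_nonneg.mpr (hbelow y (by omega)))
      · rw [c.elitist z y (by omega), zero_mul]
    rw [hDz, ← Finset.sum_add_sum_compl (c.level (k + 1))]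
    linarith

theorem IsMeanHittingTime.weightedHitSum_le {m : S → ℝ} {h : ℕ → S → ℝ}
    (hm : c.IsMeanHittingTime m) (hh : c.IsHitProb h) :
    ∀ k x, c.lev x ≤ k → c.weightedHitSum h k x ≤ m x
  | 0, x, _ => by simpa [weightedHitSum] using hm.1 x
  | k + 1, x, hx => by
    have hbelow := hm.weightedHitSum_le hh k
    rw [weightedHitSum_succ]
    rcases Nat.lt_succ_iff_lt_or_eq.mp (Nat.lt_succ_of_le hx) with hlow | hx
    · rw [hh.2.2.1 (k + 1) x hlow, zero_div, add_zero]
      exact hbelow x (by omega)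
    · have := one_div_maxImproveProb_le_sub_weightedHitSum hm hh hbelow hx
      rw [hh.2.1 (k + 1) x hx]
      linarith

end LevelChain

theorem meanHittingTime_lower_bound_general
    (c : LevelChain S)
    (m : S → ℝ) (h : ℕ → S → ℝ)
    (hm : c.IsMeanHittingTime m) (hh : c.IsHitProb h) :
    ∀ k, 1 ≤ k → k ≤ c.K → ∀ x, c.lev x = k →
      m x ≥ ∑ ℓ ∈ Finset.Icc 1 k,
        sInf (h ℓ '' {z | c.lev z = k}) /
          sSup ((fun z => c.pSet z (c.levels 0 (ℓ - 1))) '' {z | c.lev z = ℓ}) := by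
  intro k _ _ x hx
  refine le_trans (Finset.sum_le_sum fun ℓ _ => ?_) (hm.weightedHitSum_le hh k x hx.le)
  have hmin : sInf (h ℓ '' {z | c.lev z = k}) ≤ h ℓ x :=
    csInf_le (Set.toFinite _).bddBelow ⟨x, hx, rfl⟩
  exact div_le_div_of_nonneg_right hmin (c.maxImproveProb_nonneg ℓ)

/-- For every `1 ≤ k ≤ K` and every `x ∈ S_k`, the mean hitting time
of the optimal level is lower-bounded by
`m(x) ≥ Σ_{ℓ=1}^{k} h_min(X_k,S_ℓ) / p_max(X_ℓ, S_{[0,ℓ−1]})`. -/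
theorem meanHittingTime_lower_bound
    (c : LevelChain S) (hreach : c.Reachable)
    (m : S → ℝ) (h : ℕ → S → ℝ)
    (hm : c.IsMeanHittingTime m) (hh : c.IsHitProb h) :
    ∀ k, 1 ≤ k → k ≤ c.K → ∀ x, c.lev x = k →
      m x ≥ ∑ ℓ ∈ Finset.Icc 1 k,
        sInf (h ℓ '' {z | c.lev z = k}) /
          sSup ((fun z => c.pSet z (c.levels 0 (ℓ - 1))) '' {z | c.lev z = ℓ}) :=
  meanHittingTime_lower_bound_general c m h hm hh
end

section
/- Let 1 ≤ ℓ < k ≤ K and let coefficients c_{j,i} ∈ [0,1] be given for ℓ ≤ i ≤ j ≤ k with c_{j,j} = 1 for all j. If for every pair ℓ ≤ i < j ≤ k one has c_{j,i} ≥ Σ_{i'=i+1}^{j} c_{j,i'} · r_max(X_{i'},S_i), then c_{j,ℓ} ≥ h_max(X_j,S_ℓ) for every ℓ < j ≤ k. -/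
/-!
A hitting probability `h(·, S_ℓ)` is bounded by the total weight of all descending level paths
`j = a₀ > a₁ > ⋯ > a_n = ℓ`, where a step `a → b` has weight `r_max(X_a, S_b)`. Conditioning the
chain on its first step out of the current level shows that this path weight dominates `h_max`; on
the other hand, decomposing the paths by their last step shows that any coefficients satisfying the
backward drift condition dominate the path weight.
-/

open Finset

variable {S : Type*} [Fintype S]

/-- `pathSum R i j` is the sum, over all strictly decreasing chains `j = a₀ > ⋯ > a_n = i`, of
`∏ₜ R aₜ aₜ₊₁`; it is organised here by the first step out of `j`. -/
noncomputable def pathSum (R : ℕ → ℕ → ℝ) (i : ℕ) : ℕ → ℝ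
  | j =>
    if _hij : i < j then
      ∑ m ∈ (Ico i j).attach, R j m.1 * pathSum R i m.1
    else if i = j then 1 else 0
  termination_by j => j
  decreasing_by exact (mem_Ico.mp m.2).2

section PathSum

variable (R : ℕ → ℕ → ℝ)

lemma pathSum_self (i : ℕ) : pathSum R i i = 1 := by
  rw [pathSum]; simp

lemma pathSum_eq_sum_first_step {i j : ℕ} (hij : i < j) :
    pathSum R i j = ∑ m ∈ Ico i j, R j m * pathSum R i m := by
  rw [pathSum, dif_pos hij]
  exact sum_attach (Ico i j) fun m => R j m * pathSum R i m

lemma pathSum_eq_sum_last_step {i j : ℕ} (hij : i < j) :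
    pathSum R i j = ∑ m ∈ Icc (i + 1) j, pathSum R m j * R m i := by
  induction j using Nat.strong_induction_on with
  | _ j IH =>
    have hsplit : ∀ m ∈ Ico (i + 1) j, R j m * pathSum R i m
        = ∑ i' ∈ Icc (i + 1) m, R j m * pathSum R i' m * R i' i := by
      intro m hm
      rw [mem_Ico] at hm
      rw [IH m hm.2 (by omega), mul_sum]
      exact sum_congr rfl fun _ _ => by ring
    have hregroup : ∀ i' ∈ Ico (i + 1) j,
        ∑ m ∈ Ico i' j, R j m * pathSum R i' m * R i' i = pathSum R i' j * R i' i := by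
      intro i' hi'
      rw [pathSum_eq_sum_first_step R (mem_Ico.mp hi').2, sum_mul]
    rw [pathSum_eq_sum_first_step R hij, sum_eq_sum_Ico_succ_bot hij, pathSum_self, mul_one,
      sum_congr rfl hsplit,
      sum_comm' (t' := Ico (i + 1) j) (s' := fun i' => Ico i' j)
        (by intro m i'; simp only [mem_Ico, mem_Icc]; omega),
      sum_congr rfl hregroup, ← Ico_add_one_right_eq_Icc, sum_Ico_succ_top (by omega),
      pathSum_self, one_mul, add_comm]

variable {R}

lemma pathSum_nonneg (hR : ∀ a b, 0 ≤ R a b) (i j : ℕ) : 0 ≤ pathSum R i j := by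
  induction j using Nat.strong_induction_on with
  | _ j IH =>
    rcases lt_trichotomy i j with hij | rfl | hji
    · rw [pathSum_eq_sum_first_step R hij]
      exact sum_nonneg fun m hm => mul_nonneg (hR j m) (IH m (mem_Ico.mp hm).2)
    · rw [pathSum_self]; exact zero_le_one
    · rw [pathSum, dif_neg (by omega), if_neg (by omega)]

lemma pathSum_le_of_backward_supersolution (hR : ∀ a b, 0 ≤ R a b) {u : ℕ → ℝ} {ℓ j : ℕ}
    (hu_self : 1 ≤ u j)
    (hu : ∀ i, ℓ ≤ i → i < j → ∑ m ∈ Icc (i + 1) j, u m * R m i ≤ u i) :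
    ∀ i, ℓ ≤ i → i ≤ j → pathSum R i j ≤ u i := by
  refine Nat.strong_decreasing_induction ⟨j, fun i hi _ hij => absurd hij (by omega)⟩ ?_
  intro i IH hℓi hij
  rcases hij.eq_or_lt with rfl | hij
  · rwa [pathSum_self]
  · rw [pathSum_eq_sum_last_step R hij]
    refine le_trans (sum_le_sum fun m hm => ?_) (hu i hℓi hij)
    rw [mem_Icc] at hm
    exact mul_le_mul_of_nonneg_right (IH m (by omega) (by omega) hm.2) (hR m i)

end PathSum

namespace LevelChain

variable (c : LevelChain S)

lemma pSet_nonneg (x : S) (A : Finset S) : 0 ≤ c.pSet x A :=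
  sum_nonneg fun y _ => c.p_nonneg x y

lemma pSet_le_one (x : S) (A : Finset S) : c.pSet x A ≤ 1 := by
  rw [← c.p_row_sum x]
  exact sum_le_sum_of_subset_of_nonneg (subset_univ A) fun y _ _ => c.p_nonneg x y

lemma sum_levels_eq_add_sum_level (f : S → ℝ) {i j : ℕ} (hij : i < j) :
    ∑ y ∈ c.levels i j, f y = ∑ y ∈ c.levels i (j - 1), f y + ∑ y ∈ c.level j, f y := by
  classical
  rw [← sum_union]
  · congr 1
    ext y
    simp only [levels, level, mem_union, mem_filter, mem_univ, true_and]
    omega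
  · simp only [disjoint_left, levels, level, mem_filter, mem_univ, true_and]
    omega

lemma sum_levels_eq_sum_Ico (f : S → ℝ) {i j : ℕ} (hj : 0 < j) :
    ∑ y ∈ c.levels i (j - 1), f y = ∑ m ∈ Ico i j, ∑ y ∈ c.level m, f y := by
  rw [← sum_fiberwise_of_maps_to (g := c.lev) (t := Ico i j) fun y hy => by
    simp only [levels, mem_filter, mem_univ, true_and] at hy
    exact mem_Ico.mpr ⟨hy.1, by omega⟩]
  refine sum_congr rfl fun m hm => sum_congr ?_ fun _ _ => rfl
  ext y
  simp only [levels, level, mem_filter, mem_univ, true_and, mem_Ico] at hm ⊢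
  omega

lemma one_sub_pSet_level {x : S} (hx : 0 < c.lev x) :
    1 - c.pSet x (c.level (c.lev x)) = c.pSet x (c.levels 0 (c.lev x - 1)) := by
  have hall : c.pSet x (c.levels 0 (c.lev x)) = 1 := by
    rw [← c.p_row_sum x, pSet]
    refine sum_subset (subset_univ _) fun y _ hy => c.elitist x y ?_
    simp only [levels, mem_filter, mem_univ, true_and] at hy
    omega
  rw [pSet, c.sum_levels_eq_add_sum_level _ hx] at hall
  rw [pSet, pSet]
  linarith

lemma r_nonneg (x : S) (i : ℕ) : 0 ≤ c.r x i := by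
  unfold r
  split_ifs
  · exact le_rfl
  · exact div_nonneg (c.pSet_nonneg x _) (sub_nonneg.mpr (c.pSet_le_one x _))

lemma r_le_rmax {x : S} {k : ℕ} (hx : c.lev x = k) (i : ℕ) : c.r x i ≤ c.rmax k i :=
  le_csSup ((Set.toFinite _).image _).bddAbove ⟨x, hx, rfl⟩

lemma rmax_nonneg (k i : ℕ) : 0 ≤ c.rmax k i :=
  Real.sSup_nonneg <| by rintro _ ⟨x, -, rfl⟩; exact c.r_nonneg x i

variable {c} {h : ℕ → S → ℝ} {ℓ : ℕ}

/-- One-step analysis at a state where `h(·, S_ℓ)` is maximal on its level: the mass that stays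
in the level is absorbed by the maximum, leaving the conditional jump probabilities `r`. -/
lemma IsHitProb.le_sum_r_mul (hreach : c.Reachable) (hh : c.IsHitProb h) {g : ℕ → ℝ} {x : S}
    (hℓx : ℓ < c.lev x) (hmax : ∀ y, c.lev y = c.lev x → h ℓ y ≤ h ℓ x)
    (hg : ∀ y, ℓ ≤ c.lev y → c.lev y < c.lev x → h ℓ y ≤ g (c.lev y)) :
    h ℓ x ≤ ∑ i ∈ Ico ℓ (c.lev x), c.r x i * g i := by
  set j := c.lev x with hj
  have hleave : 0 < 1 - c.pSet x (c.level j) := by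
    rw [c.one_sub_pSet_level (by omega)]
    exact hreach j (by omega) (c.lev_le x) x rfl
  have hlower : ∑ y ∈ c.levels ℓ (j - 1), c.p x y * h ℓ y
      ≤ ∑ i ∈ Ico ℓ j, c.pSet x (c.level i) * g i := by
    rw [c.sum_levels_eq_sum_Ico _ (by omega)]
    refine sum_le_sum fun i hi => ?_
    rw [pSet, sum_mul]
    refine sum_le_sum fun y hy => ?_
    simp only [level, mem_filter, mem_univ, true_and] at hy
    rw [mem_Ico] at hi
    subst hy
    exact mul_le_mul_of_nonneg_left (hg y hi.1 hi.2) (c.p_nonneg x y)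
  have hsame : ∑ y ∈ c.level j, c.p x y * h ℓ y ≤ c.pSet x (c.level j) * h ℓ x := by
    rw [pSet, sum_mul]
    refine sum_le_sum fun y hy => mul_le_mul_of_nonneg_left (hmax y ?_) (c.p_nonneg x y)
    simpa [level] using hy
  have hharm := hh.2.2.2 ℓ x hℓx
  rw [← hj, c.sum_levels_eq_add_sum_level _ hℓx] at hharm
  have hdrift : h ℓ x * (1 - c.pSet x (c.level j))
      ≤ ∑ i ∈ Ico ℓ j, c.pSet x (c.level i) * g i := by
    linarith
  calc h ℓ x ≤ (∑ i ∈ Ico ℓ j, c.pSet x (c.level i) * g i) / (1 - c.pSet x (c.level j)) :=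
        (le_div_iff₀ hleave).mpr hdrift
    _ = ∑ i ∈ Ico ℓ j, c.r x i * g i := by
      rw [sum_div]
      refine sum_congr rfl fun i hi => ?_
      rw [r, if_neg (by have := (mem_Ico.mp hi).2; omega)]
      ring

lemma IsHitProb.le_pathSum_rmax (hreach : c.Reachable) (hh : c.IsHitProb h) {x : S}
    (hℓx : ℓ ≤ c.lev x) : h ℓ x ≤ pathSum c.rmax ℓ (c.lev x) := by
  induction hj : c.lev x using Nat.strong_induction_on generalizing x with
  | _ j IH =>
    subst hj
    rcases hℓx.eq_or_lt with hℓx | hℓx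
    · rw [← hℓx, pathSum_self, hh.2.1 ℓ x hℓx.symm]
    obtain ⟨x₀, hx₀, hmax⟩ := exists_max_image (c.level (c.lev x)) (h ℓ)
      ⟨x, by simp [level]⟩
    simp only [level, mem_filter, mem_univ, true_and] at hx₀ hmax
    calc h ℓ x ≤ h ℓ x₀ := hmax x rfl
      _ ≤ ∑ i ∈ Ico ℓ (c.lev x), c.r x₀ i * pathSum c.rmax ℓ i := by
        rw [← hx₀]
        exact hh.le_sum_r_mul hreach (hx₀ ▸ hℓx) (fun y hy => hmax y (hy.trans hx₀))
          fun y hℓy hy => IH _ (hx₀ ▸ hy) hℓy rfl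
      _ ≤ ∑ i ∈ Ico ℓ (c.lev x), c.rmax (c.lev x) i * pathSum c.rmax ℓ i := by
        gcongr with i
        · exact pathSum_nonneg c.rmax_nonneg ℓ i
        · exact c.r_le_rmax hx₀ i
      _ = pathSum c.rmax ℓ (c.lev x) := (pathSum_eq_sum_first_step _ hℓx).symm

end LevelChain

theorem alt_upper_coefficients_ge_hitProb_general
    (c : LevelChain S) (hreach : c.Reachable)
    (h : ℕ → S → ℝ) (hh : c.IsHitProb h)
    (ℓ k : ℕ)
    (cf : ℕ → ℕ → ℝ)
    (hcfdiag : ∀ j, ℓ ≤ j → j ≤ k → cf j j = 1)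
    (hrec : ∀ i j, ℓ ≤ i → i < j → j ≤ k →
      cf j i ≥ ∑ i' ∈ Finset.Icc (i + 1) j, cf j i' * c.rmax i' i) :
    ∀ j, ℓ < j → j ≤ k → ∀ x, c.lev x = j → cf j ℓ ≥ h ℓ x := by
  rintro j hℓj hjk x rfl
  calc h ℓ x ≤ pathSum c.rmax ℓ (c.lev x) := hh.le_pathSum_rmax hreach hℓj.le
    _ ≤ cf (c.lev x) ℓ :=
      pathSum_le_of_backward_supersolution c.rmax_nonneg (hcfdiag _ hℓj.le hjk).ge
        (fun i hℓi hij => hrec i _ hℓi hij hjk) ℓ le_rfl hℓj.le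

/-- Alternative (backward) upper-bound drift condition: if
`c_{j,j} = 1` and for every `ℓ ≤ i < j ≤ k`,
`c_{j,i} ≥ Σ_{i'=i+1}^{j} c_{j,i'}·r_max(X_{i'},S_i)`,
then `c_{j,ℓ} ≥ h_max(X_j,S_ℓ)` for every `ℓ < j ≤ k`. -/
theorem alt_upper_coefficients_ge_hitProb
    (c : LevelChain S) (hreach : c.Reachable)
    (h : ℕ → S → ℝ) (hh : c.IsHitProb h)
    (ℓ k : ℕ) (hℓ : 1 ≤ ℓ) (hℓk : ℓ < k) (hk : k ≤ c.K)
    (cf : ℕ → ℕ → ℝ)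
    (hcf01 : ∀ i j, ℓ ≤ i → i ≤ j → j ≤ k → 0 ≤ cf j i ∧ cf j i ≤ 1)
    (hcfdiag : ∀ j, ℓ ≤ j → j ≤ k → cf j j = 1)
    (hrec : ∀ i j, ℓ ≤ i → i < j → j ≤ k →
      cf j i ≥ ∑ i' ∈ Finset.Icc (i + 1) j, cf j i' * c.rmax i' i) :
    ∀ j, ℓ < j → j ≤ k → ∀ x, c.lev x = j → cf j ℓ ≥ h ℓ x :=
  alt_upper_coefficients_ge_hitProb_general c hreach h hh ℓ k cf hcfdiag hrec
end

section
/- Let 1 ≤ ℓ < k ≤ K and let P[ℓ,k] be a path from level k to level ℓ. Let coefficients c_{j,ℓ} ∈ [0,1] be given for ℓ ≤ j ≤ k such that c_{ℓ,ℓ} = 1, c_{j,ℓ} = 1 for every j ∈ (ℓ,k] not belonging to P(ℓ,k], and for every j ∈ P(ℓ,k]: c_{j,ℓ} ≥ max_{x∈S_j} ( r(x, S_{A_j}) + Σ_{i∈P(ℓ,j)} r(x,S_i) · c_{i,ℓ} ), where A_j = { i : ℓ ≤ i < j and i ∉ P(ℓ,j) } and r(x, S_{A_j}) = Σ_{i∈A_j}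 r(x,S_i). Then c_{j,ℓ} ≥ h_max(X_j,S_ℓ) for every ℓ < j ≤ k. -/
/-!
Induct on the level `j`. Off the path `c_{j,ℓ} = 1` bounds any probability. On the path, take a
state `x*` of `S_j` maximising `h(·,S_ℓ)`. In its one-step equation the states of `S_j` contribute
at most `p(x*,S_j) h(x*,S_ℓ)`, and those of a lower level `S_i` at most `p(x*,S_i) c_{i,ℓ}` by the
induction hypothesis. Since `p(x*,S_j) < 1`, dividing by `1 - p(x*,S_j)` gives
`h(x*,S_ℓ) ≤ Σ_{ℓ ≤ i < j} r(x*,S_i) c_{i,ℓ}`, which is the right-hand side of the drift condition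
once the coefficients off the path are replaced by `1`.
-/

open Finset

variable {S : Type*} [Fintype S]

namespace LevelChain

theorem sum_levels (c : LevelChain S) (a b : ℕ) (f : S → ℝ) :
    ∑ y ∈ c.levels a b, f y = ∑ i ∈ Icc a b, ∑ y ∈ c.level i, f y := by
  classical
  rw [show c.levels a b = (Icc a b).biUnion c.level by ext y; simp [levels, level]]
  refine sum_biUnion fun i _ i' _ hii' => disjoint_left.2 fun y hy hy' => hii' ?_
  exact (mem_filter.1 hy).2.symm.trans (mem_filter.1 hy').2

theorem exists_isMaxOn_level (c : LevelChain S) (f : S → ℝ) (x : S) :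
    ∃ x', c.lev x' = c.lev x ∧ ∀ y, c.lev y = c.lev x → f y ≤ f x' := by
  obtain ⟨x', hx', hmax⟩ := (c.level (c.lev x)).exists_max_image f
    ⟨x, mem_filter.2 ⟨mem_univ x, rfl⟩⟩
  exact ⟨x', (mem_filter.1 hx').2, fun y hy => hmax y (mem_filter.2 ⟨mem_univ y, hy⟩)⟩

theorem pSet_level_lev_lt_one {c : LevelChain S} (hreach : c.Reachable) {x : S}
    (hx : 1 ≤ c.lev x) : c.pSet x (c.level (c.lev x)) < 1 := by
  classical
  have hdisj : Disjoint (c.level (c.lev x)) (c.levels 0 (c.lev x - 1)) := by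
    refine disjoint_left.2 fun y hy hy' => ?_
    have := (mem_filter.1 hy).2
    have := (mem_filter.1 hy').2
    omega
  have hsum : c.pSet x (c.level (c.lev x)) + c.pSet x (c.levels 0 (c.lev x - 1)) ≤ 1 := by
    rw [← c.p_row_sum x, pSet, pSet, ← sum_union hdisj]
    exact sum_le_sum_of_subset_of_nonneg (subset_univ _) fun y _ _ => c.p_nonneg x y
  linarith [hreach _ hx (c.lev_le x) x rfl]

theorem r_of_ne (c : LevelChain S) {x : S} {i : ℕ} (hi : i ≠ c.lev x) :
    c.r x i = c.pSet x (c.level i) / (1 - c.pSet x (c.level (c.lev x))) :=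
  if_neg hi

theorem IsHitProb.le_sum_r_mul_of_isMaxOn {c : LevelChain S} (hreach : c.Reachable)
    {h : ℕ → S → ℝ} (hh : c.IsHitProb h) {ℓ j : ℕ} {x : S} (hx : c.lev x = j) (hℓj : ℓ < j)
    (hmax : ∀ y, c.lev y = j → h ℓ y ≤ h ℓ x) (b : ℕ → ℝ)
    (hb : ∀ y, ℓ ≤ c.lev y → c.lev y < j → h ℓ y ≤ b (c.lev y)) :
    h ℓ x ≤ ∑ i ∈ Ico ℓ j, c.r x i * b i := by
  subst hx
  have hq : c.pSet x (c.level (c.lev x)) < 1 := pSet_level_lev_lt_one hreach (by omega)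
  have hsame : ∑ y ∈ c.level (c.lev x), c.p x y * h ℓ y
      ≤ c.pSet x (c.level (c.lev x)) * h ℓ x := by
    rw [pSet, sum_mul]
    exact sum_le_sum fun y hy =>
      mul_le_mul_of_nonneg_left (hmax y (mem_filter.1 hy).2) (c.p_nonneg x y)
  have hlower : ∀ i ∈ Ico ℓ (c.lev x),
      ∑ y ∈ c.level i, c.p x y * h ℓ y ≤ c.pSet x (c.level i) * b i := by
    intro i hi
    rw [pSet, sum_mul]
    refine sum_le_sum fun y hy => mul_le_mul_of_nonneg_left ?_ (c.p_nonneg x y)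
    obtain rfl := (mem_filter.1 hy).2
    exact hb y (mem_Ico.1 hi).1 (mem_Ico.1 hi).2
  have hstep : h ℓ x ≤ c.pSet x (c.level (c.lev x)) * h ℓ x
      + ∑ i ∈ Ico ℓ (c.lev x), c.pSet x (c.level i) * b i := by
    calc h ℓ x = ∑ y ∈ c.level (c.lev x), c.p x y * h ℓ y
          + ∑ i ∈ Ico ℓ (c.lev x), ∑ y ∈ c.level i, c.p x y * h ℓ y := by
          rw [hh.2.2.2 ℓ x hℓj, sum_levels, ← Ico_insert_right hℓj.le,
            sum_insert right_notMem_Ico]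
      _ ≤ _ := add_le_add hsame (sum_le_sum hlower)
  have hr : ∑ i ∈ Ico ℓ (c.lev x), c.r x i * b i
      = (∑ i ∈ Ico ℓ (c.lev x), c.pSet x (c.level i) * b i)
        / (1 - c.pSet x (c.level (c.lev x))) := by
    rw [sum_div]
    refine sum_congr rfl fun i hi => ?_
    rw [c.r_of_ne (mem_Ico.1 hi).2.ne, div_mul_eq_mul_div]
  rw [hr, le_div_iff₀ (by linarith)]
  linarith

end LevelChain

theorem path_upper_coefficients_ge_hitProb_general
    (c : LevelChain S) (hreach : c.Reachable)
    (h : ℕ → S → ℝ) (hh : c.IsHitProb h)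
    (ℓ k : ℕ)
    (P : Finset ℕ)
    (cf : ℕ → ℝ)
    (hcfdiag : cf ℓ = 1)
    (hoff : ∀ j, ℓ < j → j ≤ k → j ∉ P → cf j = 1)
    (hrec : ∀ j ∈ P, j ≠ ℓ → ∀ x, c.lev x = j →
      cf j ≥ (∑ i ∈ Finset.Ico ℓ j \ (P ∩ Finset.Ioo ℓ j), c.r x i)
        + ∑ i ∈ P ∩ Finset.Ioo ℓ j, c.r x i * cf i) :
    ∀ j, ℓ < j → j ≤ k → ∀ x, c.lev x = j → cf j ≥ h ℓ x := by
  intro j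
  induction j using Nat.strong_induction_on with
  | _ j IH =>
  intro hℓj hjk x hx
  by_cases hjP : j ∉ P
  · rw [hoff j hℓj hjk hjP]
    exact (hh.1 ℓ x).2
  obtain ⟨x', hx', hmax⟩ := c.exists_isMaxOn_level (h ℓ) x
  have hb : ∀ y, ℓ ≤ c.lev y → c.lev y < j → h ℓ y ≤ cf (c.lev y) := by
    intro y hℓy hy
    rcases hℓy.eq_or_lt with rfl | hlt
    · rw [hcfdiag, hh.2.1 _ y rfl]
    · exact IH _ (by omega) hlt (by omega) y rfl
  have hcf_one : ∀ i ∈ Ico ℓ j \ (P ∩ Ioo ℓ j), cf i = 1 := by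
    intro i hi
    simp only [mem_sdiff, mem_Ico, mem_inter, mem_Ioo] at hi
    rcases hi.1.1.eq_or_lt with rfl | hlt
    · exact hcfdiag
    · exact hoff i hlt (by omega) fun hiP => hi.2 ⟨hiP, hlt, hi.1.2⟩
  calc h ℓ x ≤ h ℓ x' := hmax x rfl
    _ ≤ ∑ i ∈ Ico ℓ j, c.r x' i * cf i :=
      hh.le_sum_r_mul_of_isMaxOn hreach (hx'.trans hx) hℓj
        (fun y hy => hmax y (hy.trans hx.symm)) cf hb
    _ = (∑ i ∈ Ico ℓ j \ (P ∩ Ioo ℓ j), c.r x' i) + ∑ i ∈ P ∩ Ioo ℓ j, c.r x' i * cf i := by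
      rw [← sum_sdiff (s₁ := P ∩ Ioo ℓ j) fun i hi => by
        simp only [mem_inter, mem_Ioo, mem_Ico] at hi ⊢; omega]
      congr 1
      exact sum_congr rfl fun i hi => by rw [hcf_one i hi, mul_one]
    _ ≤ cf j := hrec j (not_not.1 hjP) hℓj.ne' x' (hx'.trans hx)

/-- Upper-bound drift condition along a path `P[ℓ,k]`: if
`c_{ℓ,ℓ} = 1`, `c_{j,ℓ} = 1` for every `j ∈ (ℓ,k]` off the path, and for every
`j ∈ P(ℓ,k]`,
`c_{j,ℓ} ≥ max_{x∈S_j}( r(x, S_{A_j}) + Σ_{i∈P(ℓ,j)} r(x,S_i)·c_{i,ℓ} )`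
with `A_j = {i : ℓ ≤ i < j, i ∉ P(ℓ,j)}`, then `c_{j,ℓ} ≥ h_max(X_j,S_ℓ)`
for every `ℓ < j ≤ k`. -/
theorem path_upper_coefficients_ge_hitProb
    (c : LevelChain S) (hreach : c.Reachable)
    (h : ℕ → S → ℝ) (hh : c.IsHitProb h)
    (ℓ k : ℕ) (hℓ : 1 ≤ ℓ) (hℓk : ℓ < k) (hk : k ≤ c.K)
    (P : Finset ℕ) (hPsub : P ⊆ Finset.Icc ℓ k) (hℓP : ℓ ∈ P) (hkP : k ∈ P)
    (cf : ℕ → ℝ)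
    (hcf01 : ∀ j, ℓ ≤ j → j ≤ k → 0 ≤ cf j ∧ cf j ≤ 1)
    (hcfdiag : cf ℓ = 1)
    (hoff : ∀ j, ℓ < j → j ≤ k → j ∉ P → cf j = 1)
    (hrec : ∀ j ∈ P, j ≠ ℓ → ∀ x, c.lev x = j →
      cf j ≥ (∑ i ∈ Finset.Ico ℓ j \ (P ∩ Finset.Ioo ℓ j), c.r x i)
        + ∑ i ∈ P ∩ Finset.Ioo ℓ j, c.r x i * cf i) :
    ∀ j, ℓ < j → j ≤ k → ∀ x, c.lev x = j → cf j ≥ h ℓ x :=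
  path_upper_coefficients_ge_hitProb_general c hreach h hh ℓ k P cf hcfdiag hoff hrec
end
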